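/- Under the standing assumptions, C* := ⋃𝒞 is itself a member of 𝒞, i.e., C* is a chain satisfying both condition (i-C*) and condition (ii-C*). -/

import Mathlib

/-- The set of strict upper bounds of a chain `C`. -/
def U {P : Type*} [PartialOrder P] (C : Set P) : Set P := {x | ∀ y ∈ C, y < x}

/-- `𝒞₀` : the set of all chains `C` of `P` satisfying condition (i-C):
for every `S ⊆ C` with `U S ⊈ U C`, one has `f (U S) ∈ C`. -/
def Cfam0 {P : Type*} [PartialOrder P] (f : Set P → P) : Set (Set P) :=
  {C | IsChain (· ≤ ·) C ∧ ∀ S ⊆ C, ¬ U S ⊆ U C → f (U S) ∈ C}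

/-- `𝒞` : the set of all `C ∈ 𝒞₀` satisfying condition (ii-C):
for every `C' ∈ 𝒞₀`, one has `C \ C' ⊆ U C'`. -/
def Cfam {P : Type*} [PartialOrder P] (f : Set P → P) : Set (Set P) :=
  {C | C ∈ Cfam0 f ∧ ∀ C' ∈ Cfam0 f, C \ C' ⊆ U C'}

/-!
By (ii-C), any element of a member of `𝒞` that lies outside some `C ∈ 𝒞₀` dominates all of `C`;
hence so does every element of `C* \ C`. This gives (ii-C*) at once and makes `C*` a chain.
For (i-C*), a witness `x ∈ U S \ U C*` fails to dominate some `c` in some `C ∈ 𝒞`; every `s ∈ S`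
lies below `x`, so cannot dominate `c`, so lies in `C`. Thus `S ⊆ C` with `U S ⊈ U C`, and
(i-C) puts `f (U S)` into `C ⊆ C*`.
-/

section

variable {P : Type*} [PartialOrder P] {f : Set P → P}

theorem sUnion_Cfam_diff_subset_U {C : Set P} (hC : C ∈ Cfam0 f) :
    ⋃₀ Cfam f \ C ⊆ U C := by
  rintro x ⟨⟨D, hD, hxD⟩, hxC⟩
  exact hD.2 C hC ⟨hxD, hxC⟩

theorem lt_of_mem_sUnion_Cfam_of_notMem {C : Set P} (hC : C ∈ Cfam0 f) {x c : P}
    (hx : x ∈ ⋃₀ Cfam f) (hxC : x ∉ C) (hc : c ∈ C) : c < x :=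
  sUnion_Cfam_diff_subset_U hC ⟨hx, hxC⟩ c hc

theorem isChain_sUnion_Cfam : IsChain (· ≤ ·) (⋃₀ Cfam f) := by
  rintro x ⟨C, hC, hxC⟩ y hy hxy
  by_cases hyC : y ∈ C
  · exact hC.1.1 hxC hyC hxy
  · exact Or.inl (lt_of_mem_sUnion_Cfam_of_notMem hC.1 hy hyC hxC).le

theorem sUnion_Cfam_mem_Cfam0 : ⋃₀ Cfam f ∈ Cfam0 f := by
  refine ⟨isChain_sUnion_Cfam, fun S hS hUS => ?_⟩
  obtain ⟨x, hxS, hxU⟩ := Set.not_subset.mp hUS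
  obtain ⟨c, ⟨C, hC, hcC⟩, hcx⟩ : ∃ c ∈ ⋃₀ Cfam f, ¬ c < x := by
    simpa only [U, Set.mem_ofPred_eq, not_forall, exists_prop] using hxU
  have hSC : S ⊆ C := fun s hs => by
    by_contra hsC
    exact hcx ((lt_of_mem_sUnion_Cfam_of_notMem hC.1 (hS hs) hsC hcC).trans (hxS s hs))
  exact ⟨C, hC, hC.1.2 S hSC fun h => hcx (h hxS c hcC)⟩

end

theorem stmt_8_general {P : Type*} [PartialOrder P]
    (f : Set P → P) :
    ⋃₀ Cfam f ∈ Cfam f :=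
  ⟨sUnion_Cfam_mem_Cfam0, fun _ hC' => sUnion_Cfam_diff_subset_U hC'⟩

/-- `C* := ⋃𝒞` is itself a member of `𝒞`. -/
theorem stmt_8 {P : Type*} [PartialOrder P] [Nonempty P]
    (hub : ∀ C : Set P, IsChain (· ≤ ·) C → ∃ x : P, ∀ y ∈ C, y ≤ x)
    (hnomax : ∀ m : P, ∃ x : P, m < x)
    (f : Set P → P) (hf : ∀ C : Set P, IsChain (· ≤ ·) C → f (U C) ∈ U C) :
    ⋃₀ Cfam f ∈ Cfam f :=
  stmt_8_general f
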